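/- arXiv:1102.0114 — 2 statements merged into one kernel-verified Lean document; each statement's English description precedes it below -/
import Mathlib

section
/- Let s > 2 and 0 < x₀, and let f : (0, x₀] → ℝ be continuously differentiable, vanishing to infinite order at 0 (i.e. f(x) = O(x^N) for all N), with all integrals below finite. Then ∫_0^{x₀} |f'(x)|² x^{−2s} dx ≥ C⁻¹ s² ∫_0^{x₀} |f(x)|² x^{−2s−2} dx for a universal constant C > 0. -/
open MeasureTheory Set Filter Topology Asymptotics

/-!
Differentiate `f² x^{p-1}` with `p = -2s`: its derivative is
`2 f f' x^{p-1} + (p - 1) f² x^{p-2}`. Integrating over `(0, x₀]`, the boundary term at `0`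
vanishes because `f` vanishes to infinite order and the one at `x₀` is nonnegative, so
`(2s + 1) ∫ f² x^{-2s-2} ≤ ∫ 2 f f' x^{-2s-1}`. Bounding the cross term by AM-GM,
`2 |f f'| x^{-2s-1} ≤ s f² x^{-2s-2} + s⁻¹ f'² x^{-2s}`, gives
`s (s + 1) ∫ f² x^{-2s-2} ≤ ∫ f'² x^{-2s}`, i.e. the claim with `C = 1`.
-/

lemma abs_two_mul_mul_rpow_sub_one_le {s x : ℝ} (hs : 0 < s) (hx : 0 < x) (a b p : ℝ) :
    |2 * a * b * x ^ (p - 1)| ≤ s * (a ^ 2 * x ^ (p - 2)) + s⁻¹ * (b ^ 2 * x ^ p) := by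
  have hw : 0 < x ^ (p - 2) := Real.rpow_pos_of_pos hx _
  have hp1 : x ^ (p - 1) = x ^ (p - 2) * x := by
    rw [← Real.rpow_add_one hx.ne']; ring_nf
  have hp : x ^ p = x ^ (p - 2) * x ^ 2 := by
    rw [← Real.rpow_natCast, ← Real.rpow_add hx]; ring_nf
  have amgm : 2 * |a| * |b| * x ≤ s * a ^ 2 + s⁻¹ * (b ^ 2 * x ^ 2) := by
    have hsq : 0 ≤ s⁻¹ * (s * |a| - x * |b|) ^ 2 := by positivity
    have hid : s⁻¹ * (s * |a| - x * |b|) ^ 2 =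
        s * |a| ^ 2 + s⁻¹ * (|b| ^ 2 * x ^ 2) - 2 * |a| * |b| * x := by
      field_simp; ring
    rw [sq_abs, sq_abs] at hid
    linarith
  rw [hp1, hp, abs_mul, abs_of_pos (mul_pos hw hx), abs_mul, abs_mul, abs_two]
  linarith [mul_le_mul_of_nonneg_left amgm hw.le]

lemma tendsto_mul_rpow_of_isBigO_pow {f : ℝ → ℝ} (hf : ∀ N : ℕ, f =O[𝓝[>] 0] fun x => x ^ N)
    (p : ℝ) : Tendsto (fun x => f x * x ^ p) (𝓝[>] 0) (𝓝 0) := by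
  obtain ⟨N, hN⟩ := exists_nat_gt (-p)
  have hq : 0 < (N : ℝ) + p := by linarith
  have hpow : Tendsto (fun x : ℝ => x ^ ((N : ℝ) + p)) (𝓝[>] 0) (𝓝 0) := by
    have := (Real.continuousAt_rpow_const 0 _ (Or.inr hq.le)).tendsto.mono_left
      (nhdsWithin_le_nhds (s := Ioi 0))
    rwa [Real.zero_rpow hq.ne'] at this
  refine ((hf N).mul (isBigO_refl (fun x : ℝ => x ^ p) _)).trans_tendsto (hpow.congr' ?_)
  filter_upwards [self_mem_nhdsWithin] with x hx
  rw [Real.rpow_add hx, Real.rpow_natCast]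

lemma tendsto_sq_mul_rpow_of_isBigO_pow {f : ℝ → ℝ} (hf : ∀ N : ℕ, f =O[𝓝[>] 0] fun x => x ^ N)
    (p : ℝ) : Tendsto (fun x => f x ^ 2 * x ^ p) (𝓝[>] 0) (𝓝 0) := by
  simpa [sq, mul_assoc] using
    (tendsto_mul_rpow_of_isBigO_pow hf 0).mul (tendsto_mul_rpow_of_isBigO_pow hf p)

section WeightedIntegrals

variable {f : ℝ → ℝ} {x₀ p : ℝ}

lemma integrableOn_two_mul_deriv_mul_rpow (hf : ContinuousOn f (Ioc 0 x₀))
    (hA : IntegrableOn (fun x => f x ^ 2 * x ^ (p - 2)) (Ioc 0 x₀))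
    (hB : IntegrableOn (fun x => deriv f x ^ 2 * x ^ p) (Ioc 0 x₀)) :
    IntegrableOn (fun x => 2 * f x * deriv f x * x ^ (p - 1)) (Ioc 0 x₀) := by
  refine (hA.add hB).mono' ?_ ?_
  · exact ((aestronglyMeasurable_const.mul
      (hf.aestronglyMeasurable measurableSet_Ioc)).mul
      (measurable_deriv f).aestronglyMeasurable).mul
      (measurable_id.pow_const _).aestronglyMeasurable
  · refine (ae_restrict_iff' measurableSet_Ioc).2 (Eventually.of_forall fun x hx => ?_)
    simpa using abs_two_mul_mul_rpow_sub_one_le one_pos hx.1 (f x) (deriv f x) p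

lemma integral_two_mul_deriv_mul_rpow_le {s : ℝ} (hs : 0 < s) (hf : ContinuousOn f (Ioc 0 x₀))
    (hA : IntegrableOn (fun x => f x ^ 2 * x ^ (p - 2)) (Ioc 0 x₀))
    (hB : IntegrableOn (fun x => deriv f x ^ 2 * x ^ p) (Ioc 0 x₀)) :
    ∫ x in Ioc 0 x₀, 2 * f x * deriv f x * x ^ (p - 1) ≤
      s * (∫ x in Ioc 0 x₀, f x ^ 2 * x ^ (p - 2)) +
        s⁻¹ * ∫ x in Ioc 0 x₀, deriv f x ^ 2 * x ^ p := by
  rw [← integral_const_mul, ← integral_const_mul,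
    ← integral_add (hA.const_mul s) (hB.const_mul s⁻¹)]
  exact setIntegral_mono_on (integrableOn_two_mul_deriv_mul_rpow hf hA hB)
    ((hA.const_mul s).add (hB.const_mul s⁻¹)) measurableSet_Ioc fun x hx =>
      (le_abs_self _).trans (abs_two_mul_mul_rpow_sub_one_le hs hx.1 _ _ _)

lemma integral_two_mul_deriv_mul_rpow_add (hx₀ : 0 < x₀) (hf : ContDiffOn ℝ 1 f (Ioc 0 x₀))
    (hzero : Tendsto (fun x => f x ^ 2 * x ^ (p - 1)) (𝓝[>] 0) (𝓝 0))
    (hA : IntegrableOn (fun x => f x ^ 2 * x ^ (p - 2)) (Ioc 0 x₀))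
    (hB : IntegrableOn (fun x => deriv f x ^ 2 * x ^ p) (Ioc 0 x₀)) :
    (∫ x in Ioc 0 x₀, 2 * f x * deriv f x * x ^ (p - 1)) +
      (p - 1) * ∫ x in Ioc 0 x₀, f x ^ 2 * x ^ (p - 2) = f x₀ ^ 2 * x₀ ^ (p - 1) := by
  have hcross := integrableOn_two_mul_deriv_mul_rpow hf.continuousOn hA hB
  have hderiv : ∀ x ∈ Ioo 0 x₀, HasDerivAt (fun x => f x ^ 2 * x ^ (p - 1))
      (2 * f x * deriv f x * x ^ (p - 1) + (p - 1) * (f x ^ 2 * x ^ (p - 2))) x := by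
    intro x hx
    have hnhds : Ioc 0 x₀ ∈ 𝓝 x := mem_of_superset (Ioo_mem_nhds hx.1 hx.2) Ioo_subset_Ioc_self
    have hfx : HasDerivAt f (deriv f x) x :=
      ((hf.contDiffAt hnhds).differentiableAt one_ne_zero).hasDerivAt
    have h := (hfx.fun_pow 2).mul (Real.hasDerivAt_rpow_const (p := p - 1) (Or.inl hx.1.ne'))
    rw [show p - 1 - 1 = p - 2 by ring] at h
    exact h.congr_deriv (by ring)
  have hleft :
      Tendsto (fun x => f x ^ 2 * x ^ (p - 1)) (𝓝[<] x₀) (𝓝 (f x₀ ^ 2 * x₀ ^ (p - 1))) := by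
    have hcont : ContinuousOn (fun x => f x ^ 2 * x ^ (p - 1)) (Ioc 0 x₀) :=
      (hf.continuousOn.pow 2).mul (continuousOn_id.rpow_const fun x hx => Or.inl hx.1.ne')
    exact (continuousWithinAt_Ioo_iff_Iio hx₀).1
      ((hcont x₀ ⟨hx₀, le_rfl⟩).mono Ioo_subset_Ioc_self)
  have hint : IntervalIntegrable (fun x => 2 * f x * deriv f x * x ^ (p - 1) +
      (p - 1) * (f x ^ 2 * x ^ (p - 2))) volume 0 x₀ :=
    (intervalIntegrable_iff_integrableOn_Ioc_of_le hx₀.le).2 (hcross.add (hA.const_mul _))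
  have hftc := intervalIntegral.integral_eq_sub_of_hasDerivAt_of_tendsto hx₀ hderiv hint hzero hleft
  rwa [intervalIntegral.integral_of_le hx₀.le, integral_add hcross (hA.const_mul _),
    integral_const_mul, sub_zero] at hftc

theorem mul_add_one_mul_integral_le_integral_deriv_sq {s : ℝ} (hs : 0 < s) (hx₀ : 0 < x₀)
    (hf : ContDiffOn ℝ 1 f (Ioc 0 x₀))
    (hzero : Tendsto (fun x => f x ^ 2 * x ^ (-2 * s - 1)) (𝓝[>] 0) (𝓝 0))
    (hA : IntegrableOn (fun x => f x ^ 2 * x ^ (-2 * s - 2)) (Ioc 0 x₀))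
    (hB : IntegrableOn (fun x => deriv f x ^ 2 * x ^ (-2 * s)) (Ioc 0 x₀)) :
    s * (s + 1) * ∫ x in Ioc 0 x₀, f x ^ 2 * x ^ (-2 * s - 2) ≤
      ∫ x in Ioc 0 x₀, deriv f x ^ 2 * x ^ (-2 * s) := by
  have hibp := integral_two_mul_deriv_mul_rpow_add hx₀ hf hzero hA hB
  have hamgm := integral_two_mul_deriv_mul_rpow_le hs hf.continuousOn hA hB
  have hbdry : 0 ≤ f x₀ ^ 2 * x₀ ^ (-2 * s - 1) := by positivity
  have hhalf : (s + 1) * ∫ x in Ioc 0 x₀, f x ^ 2 * x ^ (-2 * s - 2) ≤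
      s⁻¹ * ∫ x in Ioc 0 x₀, deriv f x ^ 2 * x ^ (-2 * s) := by
    linarith
  calc s * (s + 1) * ∫ x in Ioc 0 x₀, f x ^ 2 * x ^ (-2 * s - 2)
      ≤ s * (s⁻¹ * ∫ x in Ioc 0 x₀, deriv f x ^ 2 * x ^ (-2 * s)) := by
        rw [mul_assoc]; exact mul_le_mul_of_nonneg_left hhalf hs.le
    _ = ∫ x in Ioc 0 x₀, deriv f x ^ 2 * x ^ (-2 * s) := by field_simp

end WeightedIntegrals

/-- Carleman-type weight inequality on `(0, x₀]` with weight `x^{−2s}`, `s > 2`: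
`∫ |f'|² x^{−2s} ≥ C⁻¹ s² ∫ |f|² x^{−2s−2}` for a universal constant `C > 0`, provided `f`
vanishes to infinite order at `0` and the integrals converge. -/
theorem stmt_3 :
    ∃ C > 0, ∀ (s x₀ : ℝ), 2 < s → 0 < x₀ → ∀ f : ℝ → ℝ,
      ContDiffOn ℝ 1 f (Set.Ioc 0 x₀) →
      (∀ N : ℕ, Asymptotics.IsBigO (nhdsWithin 0 (Set.Ioi 0)) f (fun x => x ^ N)) →
      IntegrableOn (fun x => (deriv f x) ^ 2 * x ^ (-2 * s)) (Set.Ioc 0 x₀) →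
      IntegrableOn (fun x => (f x) ^ 2 * x ^ (-2 * s - 2)) (Set.Ioc 0 x₀) →
      (∫ x in Set.Ioc 0 x₀, (deriv f x) ^ 2 * x ^ (-2 * s)) ≥
        C⁻¹ * s ^ 2 * ∫ x in Set.Ioc 0 x₀, (f x) ^ 2 * x ^ (-2 * s - 2) := by
  refine ⟨1, one_pos, fun s x₀ hs hx₀ f hf hvanish hB hA => ?_⟩
  have hs0 : 0 < s := by linarith
  have hA0 : 0 ≤ ∫ x in Ioc 0 x₀, f x ^ 2 * x ^ (-2 * s - 2) :=
    setIntegral_nonneg measurableSet_Ioc fun x hx => by have := hx.1; positivity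
  have hHardy := mul_add_one_mul_integral_le_integral_deriv_sq hs0 hx₀ hf
    (tendsto_sq_mul_rpow_of_isBigO_pow hvanish _) hA hB
  rw [inv_one, one_mul, ge_iff_le]
  calc s ^ 2 * ∫ x in Ioc 0 x₀, f x ^ 2 * x ^ (-2 * s - 2)
      ≤ s * (s + 1) * ∫ x in Ioc 0 x₀, f x ^ 2 * x ^ (-2 * s - 2) := by
        gcongr; nlinarith
    _ ≤ _ := hHardy
end

section
/- Let 𝒢 = V² dt² + g and 𝒜 = VV' dt² + (V²/2)(ξ' ⊗ dt + dt ⊗ ξ') + II, where V > 0, ξ' is a 1-form on the spatial slice, and II is a symmetric 2-tensor. Then the 𝒢-norm of 𝒜 satisfies |𝒜|²_𝒢 = |II|²_g + (V⁻¹V')² + ½ V²|ξ'|²_g, and the 𝒢-trace of 𝒜 equals V⁻¹V' + Tr_g II. -/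
/-- for `𝒢 = V²dt² + g` and
`𝒜 = VV' dt² + (V²/2)(ξ'⊗dt + dt⊗ξ') + II` (index `none = t`), the `𝒢`-norm and `𝒢`-trace of
`𝒜` satisfy `|𝒜|²_𝒢 = |II|²_g + (V⁻¹V')² + ½V²|ξ'|²_g` and `Tr_𝒢 𝒜 = V⁻¹V' + Tr_g II`. -/
theorem stmt_10 {n : ℕ} (V V' : ℝ) (hV : 0 < V) (ξ : Fin n → ℝ)
    (II ginv : Matrix (Fin n) (Fin n) ℝ) (hII : II.IsSymm) (hginvsym : ginv.IsSymm)
    (A Ginv : Matrix (Option (Fin n)) (Option (Fin n)) ℝ)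
    (hA : ∀ i j, A i j =
      match i, j with
      | none, none => V * V'
      | none, some B => V ^ 2 / 2 * ξ B
      | some B, none => V ^ 2 / 2 * ξ B
      | some B, some C => II B C)
    (hGinv : ∀ i j, Ginv i j =
      match i, j with
      | none, none => (V ^ 2)⁻¹
      | none, some _ => 0
      | some _, none => 0
      | some B, some C => ginv B C) :
    (∑ i, ∑ j, ∑ k, ∑ l, Ginv i k * Ginv j l * A i j * A k l
      = (∑ B, ∑ C, ∑ D, ∑ E, ginv B D * ginv C E * II B C * II D E)
        + (V⁻¹ * V') ^ 2 + (1 / 2) * V ^ 2 * ∑ B, ∑ C, ginv B C * ξ B * ξ C) ∧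
    (∑ i, ∑ j, Ginv i j * A i j = V⁻¹ * V' + ∑ B, ∑ C, ginv B C * II B C) := by
  have hV2 : (V:ℝ)^2 ≠ 0 := by positivity
  constructor
  · simp only [Fintype.sum_option, hA, hGinv, zero_mul, mul_zero, Finset.sum_const_zero,
      zero_add, add_zero]
    rw [show ((V^2)⁻¹ * (V^2)⁻¹ * (V*V') * (V*V')) = (V⁻¹*V')^2 by field_simp]
    have h1 : ∀ x y : Fin n, (V^2)⁻¹ * ginv x y * (V^2/2*ξ x) * (V^2/2*ξ y)
        = (1/2) * (1/2*V^2*(ginv x y * ξ x * ξ y)) := by intro x y; field_simp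
    have h2 : ∀ x y : Fin n, ginv x y * (V^2)⁻¹ * (V^2/2*ξ x) * (V^2/2*ξ y)
        = (1/2) * (1/2*V^2*(ginv x y * ξ x * ξ y)) := by intro x y; field_simp
    simp only [h1, h2, ← Finset.mul_sum, Finset.sum_add_distrib]
    ring
  · simp only [Fintype.sum_option, hA, hGinv, zero_mul, Finset.sum_const_zero, zero_add, add_zero]
    rw [show ((V^2)⁻¹ * (V*V')) = V⁻¹*V' by field_simp]
end
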